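/- arXiv:0902.4823 — 2 statements merged into one kernel-verified Lean document; each statement's English description precedes it below -/
import Mathlib

section
/- Let p: E → B be a Hurewicz fibration. If the base space B is a normal topological space, then secat p ≤ n if and only if the n-th join map jⁿp: *ⁿ_B E → B admits a continuous section (a continuous map s: B → *ⁿ_B E with jⁿp ∘ s = id_B). -/
open unitInterval

universe u v w

/-- Homotopy lifting property of `p` with respect to the space `Y`. -/
def HasHLPWrt {E : Type u} {B : Type v} [TopologicalSpace E] [TopologicalSpace B]
    (p : E → B) (Y : Type w) [TopologicalSpace Y] : Prop :=
  ∀ (H : Y × I → B) (h : Y → E), Continuous H → Continuous h →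
    (∀ y, p (h y) = H (y, 0)) →
    ∃ H' : Y × I → E, Continuous H' ∧ (∀ z, p (H' z) = H z) ∧ ∀ y, H' (y, 0) = h y

/-- A Hurewicz fibration: a continuous map with the homotopy lifting property with
respect to all topological spaces. -/
def IsHurewiczFibration {E : Type u} {B : Type v} [TopologicalSpace E] [TopologicalSpace B]
    (p : E → B) : Prop :=
  Continuous p ∧ ∀ (Y : Type w) [TopologicalSpace Y], HasHLPWrt p Y

/-- `SecatLe p n` : the sectional category of `p` is at most `n`, i.e. the base can be
covered by `n+1` open sets on each of which `p` admits a continuous local section. -/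
def SecatLe {E : Type u} {B : Type v} [TopologicalSpace E] [TopologicalSpace B]
    (p : E → B) (n : ℕ) : Prop :=
  ∃ U : Fin (n + 1) → Set B, (∀ i, IsOpen (U i)) ∧ (∀ b, ∃ i, b ∈ U i) ∧
    ∀ i, ∃ s : U i → E, Continuous s ∧ ∀ x : U i, p (s x) = (x : B)

/-- The space underlying the double mapping cylinder construction of the fiber join. -/
def PreJoin {E : Type u} {E' : Type v} {B : Type w}
    (p : E → B) (p' : E' → B) : Type (max u v) :=
  ({z : E × E' // p z.1 = p' z.2} × I) ⊕ E ⊕ E'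

instance {E : Type u} {E' : Type v} {B : Type w} [TopologicalSpace E] [TopologicalSpace E']
    (p : E → B) (p' : E' → B) : TopologicalSpace (PreJoin p p') :=
  inferInstanceAs (TopologicalSpace (({z : E × E' // p z.1 = p' z.2} × I) ⊕ E ⊕ E'))

/-- The identifications defining the fiber join: `(e,e',0) ~ e` and `(e,e',1) ~ e'`. -/
inductive JoinRel {E : Type u} {E' : Type v} {B : Type w} (p : E → B) (p' : E' → B) :
    PreJoin p p' → PreJoin p p' → Prop
  | zero (z : {z : E × E' // p z.1 = p' z.2}) :
      JoinRel p p' (Sum.inl (z, 0)) (Sum.inr (Sum.inl z.1.1))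
  | one (z : {z : E × E' // p z.1 = p' z.2}) :
      JoinRel p p' (Sum.inl (z, 1)) (Sum.inr (Sum.inr z.1.2))

/-- The fiber join `E *_B E'` of two maps `p : E → B`, `p' : E' → B`. -/
def FiberJoin {E : Type u} {E' : Type v} {B : Type w} (p : E → B) (p' : E' → B) :
    Type (max u v) :=
  Quot (JoinRel p p')

instance {E : Type u} {E' : Type v} {B : Type w} [TopologicalSpace E] [TopologicalSpace E']
    (p : E → B) (p' : E' → B) : TopologicalSpace (FiberJoin p p') :=
  inferInstanceAs (TopologicalSpace (Quot (JoinRel p p')))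

/-- The join map `E *_B E' → B`. -/
def joinMap {E : Type u} {E' : Type v} {B : Type w} (p : E → B) (p' : E' → B) :
    FiberJoin p p' → B :=
  Quot.lift
    (fun z => match z with
      | Sum.inl (z, _) => p z.1.1
      | Sum.inr (Sum.inl e) => p e
      | Sum.inr (Sum.inr e') => p' e')
    (by rintro a b (⟨z⟩ | ⟨z⟩)
        · rfl
        · exact z.2)

/-- Iterated data for the `n`-fold fiber join: carrier, topology, and `n`-th join map. -/
def nJoinData {E : Type u} {B : Type v} [TopologicalSpace E] [TopologicalSpace B]
    (p : E → B) : ℕ → (T : Type u) ×' (_ : TopologicalSpace T) ×' (T → B)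
  | 0 => ⟨E, inferInstance, p⟩
  | n + 1 =>
      let prev := nJoinData p n
      letI : TopologicalSpace prev.1 := prev.2.1
      ⟨FiberJoin prev.2.2 p, inferInstance, joinMap prev.2.2 p⟩

/-- The `n`-fold fiber join `*ⁿ_B E`. -/
def nJoin {E : Type u} {B : Type v} [TopologicalSpace E] [TopologicalSpace B]
    (p : E → B) (n : ℕ) : Type u :=
  (nJoinData p n).1

instance {E : Type u} {B : Type v} [TopologicalSpace E] [TopologicalSpace B]
    (p : E → B) (n : ℕ) : TopologicalSpace (nJoin p n) :=
  (nJoinData p n).2.1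

/-- The `n`-th join map `jⁿp : *ⁿ_B E → B`. -/
def nJoinMap {E : Type u} {B : Type v} [TopologicalSpace E] [TopologicalSpace B]
    (p : E → B) (n : ℕ) : nJoin p n → B :=
  (nJoinData p n).2.2


/-!
A section of `jⁿp = j(jⁿ⁻¹p, p)` over an open set `W` is split by the two open halves of the
fiber join, where the join parameter is `< 1` resp. `> 0`. These retract onto `*ⁿ⁻¹_B E` and `E`
compatibly with the projections, so `W` is covered by two open sets carrying sections of `jⁿ⁻¹p`
and of `p`; by induction, `B` is covered by `n + 1` open sets with local sections of `p`.

Conversely, a normal space has a bump covering `fᵢ` subordinate to the cover, with some `fᵢ = 1`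
at every point, and a section of `jᵏp` is built over `{b | fⱼ b = 1 for some j ≤ k}`. Passing to
`k + 1`, the previous section exists where `f_{k+1} < 1`, the new one where `f_{k+1} > 0`, and the
join parameter is `3 f_{k+1} - 1` clamped to `[0, 1]`. It is `0` on the open set
`{f_{k+1} < 1/3}` and `1` on `{f_{k+1} > 2/3}`, so near the edges of the two domains the glued map
agrees with a single section, which is what continuity in the quotient topology needs.
-/

def HasSectionOn {E B : Type*} [TopologicalSpace E] [TopologicalSpace B] (p : E → B)
    (U : Set B) : Prop :=
  ∃ s : U → E, Continuous s ∧ ∀ x : U, p (s x) = x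

noncomputable section

namespace FiberJoin

variable {E : Type u} {E' : Type v} {B : Type w} {p : E → B} {p' : E' → B}

def inl (e : E) : FiberJoin p p' := Quot.mk _ (.inr (.inl e))

def inr (e' : E') : FiberJoin p p' := Quot.mk _ (.inr (.inr e'))

def mk (z : {z : E × E' // p z.1 = p' z.2}) (t : I) : FiberJoin p p' := Quot.mk _ (.inl (z, t))

theorem mk_zero (z : {z : E × E' // p z.1 = p' z.2}) : mk z 0 = inl z.1.1 :=
  Quot.sound (.zero z)

theorem mk_one (z : {z : E × E' // p z.1 = p' z.2}) : mk z 1 = inr z.1.2 :=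
  Quot.sound (.one z)

@[simp] theorem joinMap_inl (e : E) : joinMap p p' (inl e) = p e := rfl

@[simp] theorem joinMap_inr (e' : E') : joinMap p p' (inr e') = p' e' := rfl

@[simp] theorem joinMap_mk (z : {z : E × E' // p z.1 = p' z.2}) (t : I) :
    joinMap p p' (mk z t) = p z.1.1 := rfl

def leftCoord : FiberJoin p p' → Option E :=
  Quot.lift (Sum.elim (fun zt => if zt.2 = 1 then none else some zt.1.1.1)
    (Sum.elim some fun _ => none)) <| by
      rintro _ _ (_ | _) <;> simp

def rightCoord : FiberJoin p p' → Option E' :=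
  Quot.lift (Sum.elim (fun zt => if zt.2 = 0 then none else some zt.1.1.2)
    (Sum.elim (fun _ => none) some)) <| by
      rintro _ _ (_ | _) <;> simp

theorem leftCoord_isSome_or_rightCoord_isSome (x : FiberJoin p p') :
    (leftCoord x).isSome ∨ (rightCoord x).isSome := by
  induction x using Quot.ind with
  | mk a =>
    rcases a with ⟨z, t⟩ | e | e'
    · by_cases ht : t = 0 <;> simp [leftCoord, rightCoord, ht]
    · simp [leftCoord]
    · simp [rightCoord]

theorem map_eq_joinMap_of_leftCoord_eq_some {x : FiberJoin p p'} {e : E}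
    (h : leftCoord x = some e) : p e = joinMap p p' x := by
  induction x using Quot.ind with
  | mk a =>
    rcases a with ⟨z, t⟩ | e | e' <;> simp_all [leftCoord, joinMap]

theorem map_eq_joinMap_of_rightCoord_eq_some {x : FiberJoin p p'} {e' : E'}
    (h : rightCoord x = some e') : p' e' = joinMap p p' x := by
  induction x using Quot.ind with
  | mk a =>
    rcases a with ⟨⟨z, hz⟩, t⟩ | e | e' <;> simp_all [rightCoord, joinMap]

variable [TopologicalSpace E] [TopologicalSpace E']

theorem continuous_inl : Continuous (inl : E → FiberJoin p p') :=
  continuous_quot_mk.comp (_root_.continuous_inr.comp _root_.continuous_inl)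

theorem continuous_inr : Continuous (inr : E' → FiberJoin p p') :=
  continuous_quot_mk.comp (_root_.continuous_inr.comp _root_.continuous_inr)

theorem continuous_mk : Continuous fun zt : {z : E × E' // p z.1 = p' z.2} × I => mk zt.1 zt.2 :=
  continuous_quot_mk.comp _root_.continuous_inl

theorem isOpen_leftCoord_preimage {W : Set E} (hW : IsOpen W) :
    IsOpen (leftCoord ⁻¹' (some '' W) : Set (FiberJoin p p')) := by
  apply isQuotientMap_quot_mk.isOpen_preimage.mp
  refine isOpen_sum_iff.mpr ⟨?_, isOpen_sum_iff.mpr ⟨?_, ?_⟩⟩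
  · convert ((isOpen_compl_singleton (x := (1 : I))).preimage continuous_snd).inter
      (hW.preimage ((continuous_fst.comp continuous_subtype_val).comp continuous_fst)) using 1
    ext ⟨z, t⟩
    show leftCoord (mk z t : FiberJoin p p') ∈ some '' W ↔ t ≠ 1 ∧ _
    simp [leftCoord, mk, and_comm]
  · convert hW using 1
    ext e
    show leftCoord (inl e : FiberJoin p p') ∈ some '' W ↔ _
    simp [leftCoord, inl]
  · convert isOpen_empty using 1
    ext e'
    show leftCoord (inr e' : FiberJoin p p') ∈ some '' W ↔ _
    simp [leftCoord, inr]

theorem isOpen_rightCoord_preimage {W : Set E'} (hW : IsOpen W) :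
    IsOpen (rightCoord ⁻¹' (some '' W) : Set (FiberJoin p p')) := by
  apply isQuotientMap_quot_mk.isOpen_preimage.mp
  refine isOpen_sum_iff.mpr ⟨?_, isOpen_sum_iff.mpr ⟨?_, ?_⟩⟩
  · convert ((isOpen_compl_singleton (x := (0 : I))).preimage continuous_snd).inter
      (hW.preimage ((continuous_snd.comp continuous_subtype_val).comp continuous_fst)) using 1
    ext ⟨z, t⟩
    show rightCoord (mk z t : FiberJoin p p') ∈ some '' W ↔ t ≠ 0 ∧ _
    simp [rightCoord, mk, and_comm]
  · convert isOpen_empty using 1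
    ext e
    show rightCoord (inl e : FiberJoin p p') ∈ some '' W ↔ _
    simp [rightCoord, inl]
  · convert hW using 1
    ext e'
    show rightCoord (inr e' : FiberJoin p p') ∈ some '' W ↔ _
    simp [rightCoord, inr]

end FiberJoin
end

theorem continuous_get_of_isOpen_preimage_some {X γ : Type*} [TopologicalSpace X]
    [TopologicalSpace γ] {φ : X → Option γ}
    (hφ : ∀ W : Set γ, IsOpen W → IsOpen (φ ⁻¹' (some '' W))) :
    Continuous fun x : {x // (φ x).isSome} => (φ x).get x.2 := by
  refine continuous_def.2 fun W hW => ?_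
  convert (hφ W hW).preimage continuous_subtype_val
  ext ⟨x, hx⟩
  obtain ⟨e, he⟩ := Option.isSome_iff_exists.1 hx
  simp [he]

theorem isOpen_setOf_isSome_of_isOpen_preimage_some {X γ : Type*} [TopologicalSpace X]
    {φ : X → Option γ} (hφ : IsOpen (φ ⁻¹' (some '' Set.univ))) :
    IsOpen {x | (φ x).isSome} := by
  convert hφ
  ext x
  simp only [Set.mem_ofPred_eq, Set.image_univ, Set.mem_preimage, Set.mem_range,
    Option.isSome_iff_exists]
  exact exists_congr fun _ => eq_comm

section HasSectionOn

variable {E B Z : Type*} [TopologicalSpace E] [TopologicalSpace B] [TopologicalSpace Z]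
  {p : E → B}

theorem hasSectionOn_univ_iff :
    HasSectionOn p Set.univ ↔ ∃ s : B → E, Continuous s ∧ ∀ b, p (s b) = b :=
  ⟨fun ⟨s, hs, hps⟩ => ⟨fun b => s ⟨b, trivial⟩, hs.comp (continuous_id.subtype_mk _),
      fun _ => hps _⟩,
    fun ⟨s, hs, hps⟩ => ⟨fun x => s x, hs.comp continuous_subtype_val, fun x => hps x⟩⟩

theorem HasSectionOn.mono {U V : Set B} (h : HasSectionOn p U) (hVU : V ⊆ U) :
    HasSectionOn p V :=
  let ⟨s, hs, hps⟩ := h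
  ⟨fun x => s (Set.inclusion hVU x), hs.comp (continuous_inclusion hVU), fun _ => hps _⟩

theorem exists_hasSectionOn_of_retraction {π : Z → B} {W : Set B} (hW : IsOpen W) {s : W → Z}
    (hs : Continuous s) (hπs : ∀ x, π (s x) = x) {D : Set Z} (hD : IsOpen D) {r : D → E}
    (hr : Continuous r) (hpr : ∀ z, p (r z) = π z) :
    ∃ V, IsOpen V ∧ (∀ x : W, s x ∈ D → (x : B) ∈ V) ∧ HasSectionOn p V := by
  refine ⟨{b | ∃ hb : b ∈ W, s ⟨b, hb⟩ ∈ D}, ?_, fun x hx => ⟨x.2, hx⟩,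
    fun b => r ⟨s ⟨b, b.2.fst⟩, b.2.snd⟩, ?_, fun b => (hpr _).trans (hπs _)⟩
  · convert hW.isOpenMap_subtype_val _ (hD.preimage hs)
    ext b
    simp
  · exact hr.comp ((hs.comp (continuous_subtype_val.subtype_mk _)).subtype_mk _)

end HasSectionOn

section Backward

variable {X E B : Type*} [TopologicalSpace X] [TopologicalSpace E] [TopologicalSpace B]

open FiberJoin in
theorem exists_hasSectionOn_of_hasSectionOn_joinMap {q : X → B} {p : E → B} {W : Set B}
    (hW : IsOpen W) (h : HasSectionOn (joinMap q p) W) :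
    ∃ V U : Set B, IsOpen V ∧ IsOpen U ∧ W ⊆ V ∪ U ∧ HasSectionOn q V ∧ HasSectionOn p U := by
  obtain ⟨s, hs, hjs⟩ := h
  obtain ⟨V, hVo, hsV, hV⟩ := exists_hasSectionOn_of_retraction hW hs hjs
    (isOpen_setOf_isSome_of_isOpen_preimage_some (isOpen_leftCoord_preimage isOpen_univ))
    (continuous_get_of_isOpen_preimage_some fun _ => isOpen_leftCoord_preimage)
    fun z => map_eq_joinMap_of_leftCoord_eq_some (Option.some_get _).symm
  obtain ⟨U, hUo, hsU, hU⟩ := exists_hasSectionOn_of_retraction hW hs hjs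
    (isOpen_setOf_isSome_of_isOpen_preimage_some (isOpen_rightCoord_preimage isOpen_univ))
    (continuous_get_of_isOpen_preimage_some fun _ => isOpen_rightCoord_preimage)
    fun z => map_eq_joinMap_of_rightCoord_eq_some (Option.some_get _).symm
  refine ⟨V, U, hVo, hUo, fun b hb => ?_, hV, hU⟩
  exact (leftCoord_isSome_or_rightCoord_isSome (s ⟨b, hb⟩)).imp (hsV ⟨b, hb⟩) (hsU ⟨b, hb⟩)

theorem exists_cover_of_hasSectionOn_nJoinMap (p : E → B) (n : ℕ) {W : Set B}
    (hW : IsOpen W) (h : HasSectionOn (nJoinMap p n) W) :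
    ∃ U : Fin (n + 1) → Set B, (∀ i, IsOpen (U i)) ∧ (∀ b ∈ W, ∃ i, b ∈ U i) ∧
      ∀ i, HasSectionOn p (U i) := by
  induction n generalizing W with
  | zero => exact ⟨fun _ => W, fun _ => hW, fun b hb => ⟨0, hb⟩, fun _ => h⟩
  | succ n ih =>
    obtain ⟨V, U, hVo, hUo, hWVU, hV, hU⟩ :=
      exists_hasSectionOn_of_hasSectionOn_joinMap (q := nJoinMap p n) hW h
    obtain ⟨U', hU'o, hVU', hU'⟩ := ih hVo hV
    refine ⟨Fin.snoc U' U, Fin.lastCases (by simpa) (by simpa), fun b hb => ?_,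
      Fin.lastCases (by simpa) (by simpa)⟩
    rcases hWVU hb with hbV | hbU
    · obtain ⟨i, hi⟩ := hVU' b hbV
      exact ⟨i.castSucc, by simpa⟩
    · exact ⟨Fin.last _, by simpa⟩

end Backward

section Forward

variable {X E B Y : Type*} [TopologicalSpace X] [TopologicalSpace E] [TopologicalSpace Y]
  {q : X → B} {p : E → B}

open FiberJoin in
theorem exists_lift_joinMap (g : Y → B) {f : Y → ℝ} (hf : Continuous f)
    {s : {y | f y < 1} → X} (hs : Continuous s) (hqs : ∀ y, q (s y) = g y)
    {s' : {y | 0 < f y} → E} (hs' : Continuous s') (hps' : ∀ y, p (s' y) = g y) :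
    ∃ l : Y → FiberJoin q p, Continuous l ∧ ∀ y, joinMap q p (l y) = g y := by
  classical
  set L := {y | f y < 1 / 3}
  set M := {y | 0 < f y ∧ f y < 1}
  set R := {y | 2 / 3 < f y}
  let τ : Y → I := fun y => Set.projIcc 0 1 zero_le_one (3 * f y - 1)
  let mixed : M → FiberJoin q p := fun y =>
    mk ⟨(s ⟨y, y.2.2⟩, s' ⟨y, y.2.1⟩), (hqs _).trans (hps' ⟨y, y.2.1⟩).symm⟩ (τ y)
  let l : Y → FiberJoin q p := fun y =>
    if hM : y ∈ M then mixed ⟨y, hM⟩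
    else if h₁ : f y < 1 then inl (s ⟨y, h₁⟩)
    else inr (s' ⟨y, one_pos.trans_le (not_lt.1 h₁)⟩)
  have hL1 : L ⊆ {y | f y < 1} := fun y (hy : f y < 1 / 3) => show f y < 1 by linarith
  have hR0 : R ⊆ {y | 0 < f y} := fun y (hy : 2 / 3 < f y) => show 0 < f y by linarith
  have hlL : ∀ y : L, l y = inl (s (Set.inclusion hL1 y)) := by
    rintro ⟨y, hy : f y < 1 / 3⟩
    dsimp only [l]
    by_cases hM : y ∈ M
    · rw [dif_pos hM]
      exact (congrArg (mk _) (Set.projIcc_of_le_left _ (by linarith))).trans (mk_zero _)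
    · rw [dif_neg hM, dif_pos (by linarith)]
  have hlR : ∀ y : R, l y = inr (s' (Set.inclusion hR0 y)) := by
    rintro ⟨y, hy : 2 / 3 < f y⟩
    dsimp only [l]
    by_cases hM : y ∈ M
    · rw [dif_pos hM]
      exact (congrArg (mk _) (Set.projIcc_of_right_le _ (by linarith))).trans (mk_one _)
    · rw [dif_neg hM, dif_neg (fun h => hM ⟨by linarith, h⟩)]
  have hlM : ∀ y : M, l y = mixed y := fun y => dif_pos y.2
  have hτ : Continuous τ := continuous_projIcc.comp (by fun_prop)
  have hmixed : Continuous mixed :=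
    continuous_mk.comp ((((hs.comp (continuous_subtype_val.subtype_mk _)).prodMk
      (hs'.comp (continuous_subtype_val.subtype_mk _))).subtype_mk _).prodMk
      (hτ.comp continuous_subtype_val))
  refine ⟨l, ?_, fun y => ?_⟩
  · have hcover : L ∪ M ∪ R = Set.univ := by
      refine Set.eq_univ_of_forall fun y => ?_
      simp only [Set.mem_union, L, M, R, Set.mem_ofPred_eq]
      by_contra! h
      linarith [h.1.1, h.1.2 (by linarith), h.2]
    have hoL : IsOpen L := isOpen_lt hf continuous_const
    have hoM : IsOpen M := (isOpen_lt continuous_const hf).inter (isOpen_lt hf continuous_const)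
    have hoR : IsOpen R := isOpen_lt continuous_const hf
    rw [← continuousOn_univ, ← hcover]
    refine ContinuousOn.union_of_isOpen (ContinuousOn.union_of_isOpen ?_ ?_ hoL hoM) ?_
      (hoL.union hoM) hoR <;> rw [continuousOn_iff_continuous_domRestrict]
    · exact (funext hlL : L.domRestrict l = _) ▸
        continuous_inl.comp (hs.comp (continuous_inclusion hL1))
    · exact (funext hlM : M.domRestrict l = _) ▸ hmixed
    · exact (funext hlR : R.domRestrict l = _) ▸
        continuous_inr.comp (hs'.comp (continuous_inclusion hR0))
  · simp only [l]
    split_ifs <;> simp [mixed, hqs, hps']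

variable [TopologicalSpace B]

theorem hasSectionOn_joinMap {V U W : Set B} (hV : HasSectionOn q V) (hU : HasSectionOn p U)
    {f : B → ℝ} (hf : Continuous f) (hfV : ∀ b ∈ W, f b < 1 → b ∈ V)
    (hfU : ∀ b ∈ W, 0 < f b → b ∈ U) : HasSectionOn (joinMap q p) W := by
  obtain ⟨s, hs, hqs⟩ := hV
  obtain ⟨s', hs', hps'⟩ := hU
  exact exists_lift_joinMap (Y := W) Subtype.val (hf.comp continuous_subtype_val)
    (s := fun y => s ⟨y.1, hfV _ y.1.2 y.2⟩) (hs.comp (by fun_prop)) (fun _ => hqs _)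
    (s' := fun y => s' ⟨y.1, hfU _ y.1.2 y.2⟩) (hs'.comp (by fun_prop)) (fun _ => hps' _)

end Forward

section NJoin

variable {E B : Type*} [TopologicalSpace E] [TopologicalSpace B]

theorem hasSectionOn_nJoinMap_of_cover (p : E → B) {n : ℕ} {U : Fin (n + 1) → Set B}
    (hU : ∀ i, HasSectionOn p (U i)) {f : Fin (n + 1) → B → ℝ} (hf : ∀ i, Continuous (f i))
    (hfU : ∀ i b, 0 < f i b → b ∈ U i) (i : Fin (n + 1)) :
    HasSectionOn (nJoinMap p i) {b | ∃ j ≤ i, f j b = 1} := by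
  induction i using Fin.induction with
  | zero =>
    refine (hU 0).mono fun b ⟨j, hj, hjb⟩ => ?_
    obtain rfl : j = 0 := Fin.le_zero_iff.1 hj
    exact hfU 0 b (hjb ▸ one_pos)
  | succ i ih =>
    refine hasSectionOn_joinMap (q := nJoinMap p i.castSucc) ih (hU i.succ) (hf i.succ)
      (fun b ⟨j, hj, hjb⟩ hb => ?_) fun b _ => hfU i.succ b
    refine ⟨j, Fin.le_castSucc_iff.2 (hj.lt_of_ne ?_), hjb⟩
    rintro rfl
    exact hb.ne hjb

theorem SecatLe.hasSectionOn_nJoinMap_univ [NormalSpace B] {p : E → B} {n : ℕ}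
    (h : SecatLe p n) : HasSectionOn (nJoinMap p n) Set.univ := by
  obtain ⟨U, hUo, hcov, hU⟩ := h
  obtain ⟨f, hfU⟩ := BumpCovering.exists_isSubordinate_of_locallyFinite isClosed_univ U hUo
    (locallyFinite_of_finite U) fun b _ => Set.mem_iUnion.2 (hcov b)
  refine (hasSectionOn_nJoinMap_of_cover p hU (fun i => (f i).continuous)
    (fun i b hb => hfU i (subset_tsupport _ hb.ne')) (Fin.last n)).mono fun b _ => ?_
  exact ⟨_, Fin.le_last _, f.ind_apply b trivial⟩

end NJoin

theorem secatLe_iff_nJoinMap_section_general {E : Type u} {B : Type v}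
    [TopologicalSpace E] [TopologicalSpace B] [NormalSpace B]
    (p : E → B) (n : ℕ) :
    SecatLe p n ↔ ∃ s : B → nJoin p n, Continuous s ∧ ∀ b, nJoinMap p n (s b) = b := by
  rw [← hasSectionOn_univ_iff]
  refine ⟨SecatLe.hasSectionOn_nJoinMap_univ, fun h => ?_⟩
  obtain ⟨U, hUo, hcov, hU⟩ := exists_cover_of_hasSectionOn_nJoinMap p n isOpen_univ h
  exact ⟨U, hUo, fun b => hcov b trivial, hU⟩

/-- For a Hurewicz fibration `p : E → B` with normal base `B`,
`secat p ≤ n` if and only if the `n`-th join map `jⁿp : *ⁿ_B E → B` admits a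
continuous section. -/
theorem secatLe_iff_nJoinMap_section {E : Type u} {B : Type v}
    [TopologicalSpace E] [TopologicalSpace B] [NormalSpace B]
    (p : E → B) (hp : IsHurewiczFibration.{u, v, w} p) (n : ℕ) :
    SecatLe p n ↔ ∃ s : B → nJoin p n, Continuous s ∧ ∀ b, nJoinMap p n (s b) = b :=
  secatLe_iff_nJoinMap_section_general p n
end

section
/- Let p: E → B be a Hurewicz fibration and n ≥ 0. Form the pullback (*ⁿ_B E) ×_B E = {(z,e) : jⁿp(z) = p(e)} of p along the n-th join map jⁿp, and let p̄ₙ: (*ⁿ_B E) ×_B E → *ⁿ_B E be the first projection. Then secat p̄ₙ ≤ n. -/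
open unitInterval

universe u v w

/-! The fiber join `J *_B E` of `q : J → B` and `p : E → B` is covered by two open sets: the
points `[z, e, t]` with `t ≠ 1`, which map continuously to `J` over `B` by `[z, e, t] ↦ z`, and
those with `t ≠ 0`, which map continuously to `E` over `B` by `[z, e, t] ↦ e`. So if `q` lifts
through `p` over each of `n + 1` open sets covering `J`, then `joinMap q p` lifts through `p` over
each of `n + 2` open sets covering `J *_B E`: pull the old sets back to the first part, and add
the second part, over which `[z, e, t] ↦ e` is a lift. By induction from the identity lift of
`p`, the map `jⁿp` lifts through `p` over each of `n + 1` open sets, and a lift of `jⁿp` over `U`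
is the same as a section of the pullback of `p` along `jⁿp` over `U`. -/

section PartialMaps

variable {X J : Type*} [TopologicalSpace X] [TopologicalSpace J] {c : X → Option J}

theorem isOpen_setOf_isSome (hc : ∀ O, IsOpen O → IsOpen (c ⁻¹' (some '' O))) :
    IsOpen {x | (c x).isSome} := by
  convert hc Set.univ isOpen_univ
  ext x
  cases h : c x <;> simp [h]

theorem continuous_get_of_isOpen_preimage_image_some
    (hc : ∀ O, IsOpen O → IsOpen (c ⁻¹' (some '' O))) :
    Continuous fun x : {x | (c x).isSome} => (c x).get x.2 := by
  refine continuous_def.mpr fun O hO => ?_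
  convert (hc O hO).preimage continuous_subtype_val
  ext ⟨x, hx⟩
  obtain ⟨z, hz⟩ := Option.isSome_iff_exists.mp hx
  simp [hz]

end PartialMaps

section Lifts

variable {X J E B : Type*} [TopologicalSpace X] [TopologicalSpace J] [TopologicalSpace E]
  {q : J → B} {p : E → B} {n : ℕ}

def LiftsOn (q : J → B) (p : E → B) (U : Set J) : Prop :=
  ∃ s : U → E, Continuous s ∧ ∀ x : U, p (s x) = q x

/-- Equivalent to `SecatLe` of the pullback of `p` along `q`; for `q = id` it is `SecatLe p n`. -/
def HasLiftCover (q : J → B) (p : E → B) (n : ℕ) : Prop :=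
  ∃ U : Fin (n + 1) → Set J, (∀ i, IsOpen (U i)) ∧ (∀ x, ∃ i, x ∈ U i) ∧ ∀ i, LiftsOn q p (U i)

theorem LiftsOn.comp {r : X → B} {V : Set X} {c : V → J} (hc : Continuous c)
    (hcr : ∀ x, q (c x) = r x) {S : Set J} (h : LiftsOn q p S) :
    LiftsOn r p (Subtype.val '' (c ⁻¹' S)) := by
  obtain ⟨s, hs, hps⟩ := h
  have hV : ∀ x : Subtype.val '' (c ⁻¹' S), ∃ hx : x.1 ∈ V, c ⟨x, hx⟩ ∈ S := by
    rintro ⟨_, ⟨y, hy, rfl⟩⟩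
    exact ⟨y.2, hy⟩
  refine ⟨fun x => s ⟨c ⟨x, (hV x).1⟩, (hV x).2⟩, by fun_prop, fun x => ?_⟩
  rw [hps, hcr]

theorem HasLiftCover.extend {r : X → B} (h : HasLiftCover q p n) {V : Set X} (hV : IsOpen V)
    {c : V → J} (hc : Continuous c) (hcr : ∀ x, q (c x) = r x) {W : Set X} (hW : IsOpen W)
    (hWr : LiftsOn r p W) (hVW : ∀ x, x ∈ V ∨ x ∈ W) : HasLiftCover r p (n + 1) := by
  obtain ⟨U, hU, hcov, hlift⟩ := h
  refine ⟨Fin.snoc (fun i => Subtype.val '' (c ⁻¹' U i)) W, fun i => ?_, fun x => ?_,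
    fun i => ?_⟩
  · refine Fin.lastCases ?_ (fun i => ?_) i
    · simpa using hW
    · simpa using hV.isOpenMap_subtype_val _ ((hU i).preimage hc)
  · rcases hVW x with hx | hx
    · obtain ⟨i, hi⟩ := hcov (c ⟨x, hx⟩)
      exact ⟨i.castSucc, by rw [Fin.snoc_castSucc]; exact ⟨⟨x, hx⟩, hi, rfl⟩⟩
    · exact ⟨Fin.last _, by rwa [Fin.snoc_last]⟩
  · refine Fin.lastCases ?_ (fun i => ?_) i
    · simpa using hWr
    · simpa using (hlift i).comp hc hcr

theorem HasLiftCover.secatLe_pullback (h : HasLiftCover q p n) :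
    SecatLe (fun z : {x : J × E // q x.1 = p x.2} => (z : J × E).1) n := by
  obtain ⟨U, hU, hcov, hlift⟩ := h
  refine ⟨U, hU, hcov, fun i => ?_⟩
  obtain ⟨s, hs, hps⟩ := hlift i
  exact ⟨fun x => ⟨(x, s x), (hps x).symm⟩, by fun_prop, fun _ => rfl⟩

end Lifts

namespace PreJoin

variable {J E B : Type*} (q : J → B) (p : E → B)

/-- The `J`-coordinate of `[z, e, t]`; it is undefined at `t = 1`, where the point becomes `e`. -/
noncomputable def left? : PreJoin q p → Option J
  | Sum.inl (w, t) => if t = 1 then none else some w.1.1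
  | Sum.inr (Sum.inl z) => some z
  | Sum.inr (Sum.inr _) => none

/-- The `E`-coordinate of `[z, e, t]`; it is undefined at `t = 0`, where the point becomes `z`. -/
noncomputable def right? : PreJoin q p → Option E
  | Sum.inl (w, t) => if t = 0 then none else some w.1.2
  | Sum.inr (Sum.inl _) => none
  | Sum.inr (Sum.inr e) => some e

variable {q p} [TopologicalSpace J] [TopologicalSpace E]

theorem isOpen_preimage_left? {O : Set J} (hO : IsOpen O) :
    IsOpen (left? q p ⁻¹' (some '' O)) := by
  change IsOpen {a : ({z : J × E // q z.1 = p z.2} × I) ⊕ J ⊕ E | left? q p a ∈ some '' O}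
  refine isOpen_sum_iff.mpr ⟨?_, isOpen_sum_iff.mpr ⟨by simpa [left?] using hO, by simp [left?]⟩⟩
  convert (isOpen_ne (x := (1 : I)).preimage continuous_snd).inter
    (hO.preimage (by fun_prop : Continuous fun w : {z : J × E // q z.1 = p z.2} × I => w.1.1.1))
  ext ⟨w, t⟩
  by_cases ht : t = 1 <;> simp [left?, ht]

theorem isOpen_preimage_right? {O : Set E} (hO : IsOpen O) :
    IsOpen (right? q p ⁻¹' (some '' O)) := by
  change IsOpen {a : ({z : J × E // q z.1 = p z.2} × I) ⊕ J ⊕ E | right? q p a ∈ some '' O}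
  refine isOpen_sum_iff.mpr ⟨?_, isOpen_sum_iff.mpr ⟨by simp [right?], by simpa [right?] using hO⟩⟩
  convert (isOpen_ne (x := (0 : I)).preimage continuous_snd).inter
    (hO.preimage (by fun_prop : Continuous fun w : {z : J × E // q z.1 = p z.2} × I => w.1.1.2))
  ext ⟨w, t⟩
  by_cases ht : t = 0 <;> simp [right?, ht]

end PreJoin

namespace FiberJoin

variable {J E B : Type*} (q : J → B) (p : E → B)

noncomputable def left? : FiberJoin q p → Option J :=
  Quot.lift (PreJoin.left? q p) (by rintro _ _ (⟨z⟩ | ⟨z⟩) <;> simp [PreJoin.left?])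

noncomputable def right? : FiberJoin q p → Option E :=
  Quot.lift (PreJoin.right? q p) (by rintro _ _ (⟨z⟩ | ⟨z⟩) <;> simp [PreJoin.right?])

variable {q p}

theorem isOpen_preimage_left? [TopologicalSpace J] [TopologicalSpace E] {O : Set J}
    (hO : IsOpen O) : IsOpen (left? q p ⁻¹' (some '' O)) :=
  isQuotientMap_quot_mk.isOpen_preimage.mp (PreJoin.isOpen_preimage_left? hO)

theorem isOpen_preimage_right? [TopologicalSpace J] [TopologicalSpace E] {O : Set E}
    (hO : IsOpen O) : IsOpen (right? q p ⁻¹' (some '' O)) :=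
  isQuotientMap_quot_mk.isOpen_preimage.mp (PreJoin.isOpen_preimage_right? hO)

theorem joinMap_eq_of_left?_eq_some {x : FiberJoin q p} {z : J} (h : left? q p x = some z) :
    joinMap q p x = q z := by
  obtain ⟨a, rfl⟩ := Quot.exists_rep x
  change PreJoin.left? q p a = some z at h
  rcases a with ⟨w, t⟩ | z' | e <;> simp [PreJoin.left?] at h
  · exact congrArg q h.2
  · exact congrArg q h

theorem joinMap_eq_of_right?_eq_some {x : FiberJoin q p} {e : E} (h : right? q p x = some e) :
    joinMap q p x = p e := by
  obtain ⟨a, rfl⟩ := Quot.exists_rep x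
  change PreJoin.right? q p a = some e at h
  rcases a with ⟨w, t⟩ | z | e' <;> simp [PreJoin.right?] at h
  · exact h.2 ▸ w.2
  · exact congrArg p h

theorem left?_isSome_or_right?_isSome (x : FiberJoin q p) :
    (left? q p x).isSome ∨ (right? q p x).isSome := by
  obtain ⟨⟨w, t⟩ | z | e, rfl⟩ := Quot.exists_rep x
  · by_cases ht : t = 0
    · exact Or.inl (by simp [left?, PreJoin.left?, ht])
    · exact Or.inr (by simp [right?, PreJoin.right?, ht])
  · exact Or.inl rfl
  · exact Or.inr rfl

end FiberJoin

theorem HasLiftCover.joinMap {J E B : Type*} [TopologicalSpace J] [TopologicalSpace E]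
    {q : J → B} {p : E → B} {n : ℕ} (h : HasLiftCover q p n) :
    HasLiftCover (joinMap q p) p (n + 1) :=
  h.extend (isOpen_setOf_isSome fun _ => FiberJoin.isOpen_preimage_left?)
    (continuous_get_of_isOpen_preimage_image_some fun _ => FiberJoin.isOpen_preimage_left?)
    (fun x => (FiberJoin.joinMap_eq_of_left?_eq_some (Option.some_get x.2).symm).symm)
    (isOpen_setOf_isSome fun _ => FiberJoin.isOpen_preimage_right?)
    ⟨_, continuous_get_of_isOpen_preimage_image_some fun _ => FiberJoin.isOpen_preimage_right?,
      fun x => (FiberJoin.joinMap_eq_of_right?_eq_some (Option.some_get x.2).symm).symm⟩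
    FiberJoin.left?_isSome_or_right?_isSome

theorem hasLiftCover_nJoinMap {E B : Type*} [TopologicalSpace E] [TopologicalSpace B]
    (p : E → B) : ∀ n, HasLiftCover (nJoinMap p n) p n
  | 0 => ⟨fun _ => Set.univ, fun _ => isOpen_univ, fun _ => ⟨0, trivial⟩,
      fun _ => ⟨Subtype.val, continuous_subtype_val, fun _ => rfl⟩⟩
  | n + 1 => (hasLiftCover_nJoinMap p n).joinMap

theorem secatLe_pullback_nJoinMap_general {E : Type u} {B : Type v}
    [TopologicalSpace E] [TopologicalSpace B]
    (p : E → B) (n : ℕ) :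
    SecatLe (fun z : {x : nJoin p n × E // nJoinMap p n x.1 = p x.2} =>
      (z : nJoin p n × E).1) n :=
  (hasLiftCover_nJoinMap p n).secatLe_pullback

/-- For a Hurewicz fibration `p : E → B`, the pullback
`p̄ₙ : (*ⁿ_B E) ×_B E → *ⁿ_B E` of `p` along the `n`-th join map has
sectional category at most `n`. -/
theorem secatLe_pullback_nJoinMap {E : Type u} {B : Type v}
    [TopologicalSpace E] [TopologicalSpace B]
    (p : E → B) (hp : IsHurewiczFibration.{u, v, w} p) (n : ℕ) :
    SecatLe (fun z : {x : nJoin p n × E // nJoinMap p n x.1 = p x.2} =>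
      (z : nJoin p n × E).1) n :=
  secatLe_pullback_nJoinMap_general p n
end
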